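/- Let τ be a Galton-Watson tree with offspring distribution μ on the nonnegative integers. Then the Lukasiewicz path D(τ) is a random walk started at 0, stopped at the first hitting time of -1, whose jump distribution is ρ(k) = μ(k+1) for k ≥ -1. -/

import Mathlib

open scoped Classical

/-- A finite rooted ordered tree, encoded as a finite set of finite words of positive
integers: the root is the empty word, the set is closed under taking prefixes, and the
children of a vertex `u` present in the tree are exactly `u++[1], …, u++[k_u]`. -/
structure OTree where
  verts : Finset (List ℕ)
  root_mem : ([] : List ℕ) ∈ verts
  snoc_mem : ∀ (u : List ℕ) (j : ℕ), u ++ [j] ∈ verts → u ∈ verts ∧ 1 ≤ j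
  initial_seg : ∀ (u : List ℕ) (j k : ℕ), u ++ [k] ∈ verts → 1 ≤ j → j ≤ k →
      u ++ [j] ∈ verts

namespace OTree

/-- the number `k_u(t)` of children of the word `u` in the tree `t` -/
noncomputable def kids (t : OTree) (u : List ℕ) : ℕ :=
  (t.verts.filter fun v => u <+: v ∧ v.length = u.length + 1).card

/-- the `n`-th vertex of `t` in the lexicographical order (`u_n`) -/
noncomputable def vtx (t : OTree) (n : ℕ) : List ℕ :=
  (t.verts.sort (· ≤ ·)).getD n []

/-- the height process of `t` : `H_n(t) = |u_n|` -/
noncomputable def H (t : OTree) (n : ℕ) : ℕ := (t.vtx n).length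

/-- the Lukasiewicz path of `t` : `D_0(t)=0`, `D_{n+1}(t)=D_n(t)+k_{u_n}(t)-1` -/
noncomputable def D (t : OTree) (n : ℕ) : ℤ :=
  ∑ j ∈ Finset.range n, ((t.kids (t.vtx j) : ℤ) - 1)

end OTree

open MeasureTheory
open scoped ENNReal

/-- the jump distribution `ρ(k) = μ(k+1)`, `k ≥ -1`, as a function on `ℤ` -/
noncomputable def stepLaw (μ : PMF ℕ) (z : ℤ) : ℝ≥0∞ :=
  if -1 ≤ z then μ (z + 1).toNat else 0

/-!
Both sides are computed as the mass of a set of first-passage paths (integer words whose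
partial sums first reach `-1` at the last letter) under the weight `∏ ρ(p_j)`. A tree `t`
gives the first-passage path `k_{u_0}(t) - 1, …, k_{u_{#t-1}}(t) - 1` of weight
`P(τ = t)`, and different trees give different paths because `u_{j+1}` is the least child of
`u_0, …, u_j` exceeding `u_j`. A first-passage path gives the event that the walk starts
with it, whose probability is the weight; these events are disjoint as no first-passage
path is a proper prefix of another, and they cover the event that the walk hits `-1`.

Nothing is assumed measurable, so additivity of `P` is only available for partitions of
`Ω` whose pieces have total mass at most one. The walk gives this bound for the trees;
since `τ` is defined everywhere the tree weights then sum to exactly one. Hence the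
first-passage paths have total weight one, which makes the walk hit `-1` almost surely and
leaves no mass on first-passage paths that do not come from trees.
-/

open Finset

/-- No measurability of `f` is assumed: the bound on the total mass forces additivity. -/
theorem measure_preimage_eq_tsum_of_tsum_le_one {Ω α : Type*} [MeasurableSpace Ω]
    (P : Measure Ω) [IsProbabilityMeasure P] [Countable α] (f : Ω → α)
    (hf : ∑' a, P (f ⁻¹' {a}) ≤ 1) (s : Set α) :
    P (f ⁻¹' s) = ∑' a : s, P (f ⁻¹' {(a : α)}) := by
  have hle : ∀ s : Set α, P (f ⁻¹' s) ≤ ∑' a : s, P (f ⁻¹' {(a : α)}) := fun s => by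
    simpa only [Set.biUnion_preimage_singleton] using
      measure_biUnion_le P s.to_countable fun a => f ⁻¹' {a}
  have hsplit : ∑' a : s, P (f ⁻¹' {(a : α)}) + ∑' a : ↑sᶜ, P (f ⁻¹' {(a : α)})
      = ∑' a, P (f ⁻¹' {a}) :=
    Summable.tsum_add_tsum_compl (f := fun a => P (f ⁻¹' {a})) ENNReal.summable ENNReal.summable
  have hfin : ∑' a : ↑sᶜ, P (f ⁻¹' {(a : α)}) ≠ ⊤ :=
    ne_top_of_le_ne_top ENNReal.one_ne_top (hsplit ▸ hf |>.trans' le_add_self)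
  refine le_antisymm (hle s) ((ENNReal.add_le_add_iff_right hfin).mp ?_)
  calc ∑' a : s, P (f ⁻¹' {(a : α)}) + ∑' a : ↑sᶜ, P (f ⁻¹' {(a : α)}) ≤ 1 := hsplit ▸ hf
    _ = P (f ⁻¹' s ∪ f ⁻¹' sᶜ) := by
      rw [← Set.preimage_union, Set.union_compl_self, Set.preimage_univ, measure_univ]
    _ ≤ P (f ⁻¹' s) + ∑' a : ↑sᶜ, P (f ⁻¹' {(a : α)}) :=
      (measure_union_le _ _).trans (add_le_add_right (hle sᶜ) _)

noncomputable def stepPMF (μ : PMF ℕ) : PMF ℤ := μ.map fun k : ℕ => (k : ℤ) - 1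

theorem stepPMF_apply (μ : PMF ℕ) (z : ℤ) : stepPMF μ z = stepLaw μ z := by
  rw [stepPMF, PMF.map_apply, stepLaw]
  split_ifs with hz
  · rw [tsum_eq_single (z + 1).toNat fun k hk => by rw [if_neg (by omega)], if_pos (by omega)]
  · exact ENNReal.tsum_eq_zero.mpr fun k => if_neg (by omega)

noncomputable def stepsLaw (μ : PMF ℕ) (N : ℕ) : Measure (Fin N → ℤ) :=
  Measure.pi fun _ => (stepPMF μ).toMeasure

instance (μ : PMF ℕ) (N : ℕ) : IsProbabilityMeasure (stepsLaw μ N) := by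
  unfold stepsLaw; infer_instance

theorem stepsLaw_singleton (μ : PMF ℕ) {N : ℕ} (w : Fin N → ℤ) :
    stepsLaw μ N {w} = ∏ j, stepLaw μ (w j) := by
  simp only [stepsLaw, Measure.pi_singleton, PMF.toMeasure_apply_singleton _ _
    (MeasurableSet.singleton _), stepPMF_apply]

def steps {Ω : Type*} (ξ : ℕ → Ω → ℤ) (N : ℕ) (ω : Ω) : Fin N → ℤ := fun j => ξ j ω

section Steps

variable {Ω : Type*} [MeasurableSpace Ω] (P : Measure Ω) (μ : PMF ℕ) (ξ : ℕ → Ω → ℤ)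
  (hiid : ∀ (n : ℕ) (z : ℕ → ℤ),
    P {ω | ∀ j < n, ξ j ω = z j} = ∏ j ∈ range n, stepLaw μ (z j))

include hiid in
theorem measure_steps_preimage_singleton {N : ℕ} (w : Fin N → ℤ) :
    P (steps ξ N ⁻¹' {w}) = stepsLaw μ N {w} := by
  let z : ℕ → ℤ := fun j => if h : j < N then w ⟨j, h⟩ else 0
  have hset : steps ξ N ⁻¹' {w} = {ω | ∀ j < N, ξ j ω = z j} := by
    ext ω
    simp only [Set.mem_preimage, Set.mem_singleton_iff, funext_iff, steps, Set.mem_ofPred_eq, z]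
    exact ⟨fun h j hj => by rw [dif_pos hj, ← h], fun h j => by rw [h j j.2, dif_pos j.2]⟩
  rw [hset, hiid, stepsLaw_singleton, ← Fin.prod_univ_eq_prod_range]
  simp only [z, Fin.is_lt, dif_pos, Fin.eta]

include hiid in
theorem measure_steps_preimage [IsProbabilityMeasure P] (N : ℕ) (W : Set (Fin N → ℤ)) :
    P (steps ξ N ⁻¹' W) = stepsLaw μ N W := by
  have hmass : ∀ W : Set (Fin N → ℤ),
      ∑' w : W, P (steps ξ N ⁻¹' {(w : Fin N → ℤ)}) = stepsLaw μ N W := fun W => by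
    simp only [measure_steps_preimage_singleton P μ ξ hiid,
      tsum_subtype W fun w => stepsLaw μ N {w}]
    exact Measure.tsum_indicator_apply_singleton _ _ .of_discrete
  have htot : ∑' w, P (steps ξ N ⁻¹' {w}) ≤ 1 := by
    rw [← tsum_univ, hmass, measure_univ]
  rw [measure_preimage_eq_tsum_of_tsum_le_one P _ htot, hmass]

end Steps

def partialSum (p : List ℤ) (j : ℕ) : ℤ := ∑ i ∈ range j, p.getD i 0

def IsFirstPassage (p : List ℤ) : Prop :=
  (∀ j < p.length, partialSum p j ≠ -1) ∧ partialSum p p.length = -1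

theorem partialSum_congr {p q : List ℤ} {m : ℕ} (h : ∀ j < m, p.getD j 0 = q.getD j 0) :
    partialSum p m = partialSum q m :=
  sum_congr rfl fun j hj => h j (mem_range.mp hj)

/-- First-passage paths form a prefix code. -/
theorem IsFirstPassage.eq_of_getD_eq {p q : List ℤ} (hp : IsFirstPassage p)
    (hq : IsFirstPassage q) (h : ∀ j < min p.length q.length, p.getD j 0 = q.getD j 0) :
    p = q := by
  wlog hpq : p.length ≤ q.length generalizing p q
  · exact (this hq hp (fun j hj => (h j (by rwa [min_comm])).symm) (le_of_not_ge hpq)).symm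
  have hlen : p.length = q.length := by
    by_contra hne
    have hsum := partialSum_congr (m := p.length) fun j hj => h j (by omega)
    exact hq.1 _ (by omega) (hsum ▸ hp.2)
  refine List.ext_getElem hlen fun j h₁ h₂ => ?_
  simpa only [List.getD_eq_getElem _ _ h₁, List.getD_eq_getElem _ _ h₂] using h j (by omega)

noncomputable def pathWeight (μ : PMF ℕ) (p : List ℤ) : ℝ≥0∞ :=
  ∏ j ∈ range p.length, stepLaw μ (p.getD j 0)

instance : MeasurableSpace (List ℤ) := ⊤

noncomputable def pathMeasure (μ : PMF ℕ) : Measure (List ℤ) :=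
  Measure.sum fun p => pathWeight μ p • Measure.dirac p

theorem pathMeasure_apply (μ : PMF ℕ) (s : Set (List ℤ)) :
    pathMeasure μ s = ∑' p : s, pathWeight μ p := by
  rw [pathMeasure, Measure.sum_apply _ .of_discrete, _root_.tsum_subtype]
  congr 1 with p
  simp [Set.indicator_apply]

theorem pathMeasure_eq_iSup_inter_length_le (μ : PMF ℕ) (V : Set (List ℤ)) :
    pathMeasure μ V = ⨆ N, pathMeasure μ (V ∩ {p | p.length ≤ N}) := by
  have hmono : Monotone fun N => V ∩ {p : List ℤ | p.length ≤ N} :=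
    fun M N hMN => Set.inter_subset_inter_right _ fun p hp => le_trans hp hMN
  rw [← hmono.measure_iUnion, ← Set.inter_iUnion]
  congr
  exact (Set.inter_eq_left.mpr fun p _ => Set.mem_iUnion.mpr ⟨p.length, le_refl p.length⟩).symm

def pathCylinder {Ω : Type*} (ξ : ℕ → Ω → ℤ) (p : List ℤ) : Set Ω :=
  {ω | ∀ j < p.length, ξ j ω = p.getD j 0}

def pathBox (N : ℕ) (p : List ℤ) : Set (Fin N → ℤ) :=
  Set.univ.pi fun j => {z | (j : ℕ) < p.length → z = p.getD j 0}

theorem pathCylinder_eq_preimage_pathBox {Ω : Type*} (ξ : ℕ → Ω → ℤ) {N : ℕ} {p : List ℤ}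
    (h : p.length ≤ N) : pathCylinder ξ p = steps ξ N ⁻¹' pathBox N p := by
  ext ω
  simp only [pathCylinder, pathBox, steps, Set.mem_preimage, Set.mem_univ_pi, Set.mem_ofPred_eq]
  exact ⟨fun hω j hj => hω j hj, fun hω j hj => hω ⟨j, by omega⟩ hj⟩

theorem biUnion_pathCylinder_eq_preimage {Ω : Type*} (ξ : ℕ → Ω → ℤ) {N : ℕ}
    {V : Set (List ℤ)} (hV : ∀ p ∈ V, p.length ≤ N) :
    ⋃ p ∈ V, pathCylinder ξ p = steps ξ N ⁻¹' ⋃ p ∈ V, pathBox N p := by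
  simp only [Set.preimage_iUnion₂]
  exact Set.iUnion₂_congr fun p hp => pathCylinder_eq_preimage_pathBox ξ (hV p hp)

theorem stepsLaw_pathBox (μ : PMF ℕ) {N : ℕ} {p : List ℤ} (h : p.length ≤ N) :
    stepsLaw μ N (pathBox N p) = pathWeight μ p := by
  have hfactor : ∀ j : Fin N,
      (stepPMF μ).toMeasure {z | (j : ℕ) < p.length → z = p.getD j 0}
        = if (j : ℕ) < p.length then stepLaw μ (p.getD j 0) else 1 := by
    intro j
    split_ifs with hj
    · simp [hj, PMF.toMeasure_apply_singleton, stepPMF_apply]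
    · simp [hj]
  rw [stepsLaw, pathBox, Measure.pi_pi, Fintype.prod_congr _ _ hfactor,
    Fin.prod_univ_eq_prod_range (fun j => if j < p.length then stepLaw μ (p.getD j 0) else 1),
    ← prod_filter, pathWeight]
  congr 1 with j
  simp only [mem_filter, mem_range]
  omega

theorem disjoint_pathBox {N : ℕ} {p q : List ℤ} (hp : IsFirstPassage p) (hq : IsFirstPassage q)
    (hpN : p.length ≤ N) (hne : p ≠ q) : Disjoint (pathBox N p) (pathBox N q) := by
  refine Set.disjoint_left.mpr fun w hwp hwq => hne (hp.eq_of_getD_eq hq fun j hj => ?_)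
  simp only [pathBox, Set.mem_univ_pi, Set.mem_ofPred_eq] at hwp hwq
  have hjN : j < N := by omega
  exact (hwp ⟨j, hjN⟩ (by simp only; omega)).symm.trans (hwq ⟨j, hjN⟩ (by simp only; omega))

theorem stepsLaw_biUnion_pathBox (μ : PMF ℕ) {N : ℕ} {V : Set (List ℤ)}
    (hV : ∀ p ∈ V, IsFirstPassage p ∧ p.length ≤ N) :
    stepsLaw μ N (⋃ p ∈ V, pathBox N p) = pathMeasure μ V := by
  rw [measure_biUnion V.to_countable ?_ fun _ _ => .of_discrete, pathMeasure_apply]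
  · exact tsum_congr fun p => stepsLaw_pathBox μ (hV p p.2).2
  · exact fun p hp q hq hne => disjoint_pathBox (hV p hp).1 (hV q hq).1 (hV p hp).2 hne

def walk {Ω : Type*} (ξ : ℕ → Ω → ℤ) (n : ℕ) (ω : Ω) : ℤ := ∑ j ∈ range n, ξ j ω

noncomputable def hittingTime {Ω : Type*} (ξ : ℕ → Ω → ℤ) (ω : Ω) : ℕ :=
  sInf {n | walk ξ n ω = -1}

section Walk

variable {Ω : Type*} {ξ : ℕ → Ω → ℤ} {p : List ℤ} {ω : Ω}

theorem walk_eq_partialSum (hω : ω ∈ pathCylinder ξ p) {j : ℕ} (hj : j ≤ p.length) :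
    walk ξ j ω = partialSum p j :=
  sum_congr rfl fun i hi => hω i (by rw [mem_range] at hi; omega)

theorem hittingTime_eq_length (hp : IsFirstPassage p) (hω : ω ∈ pathCylinder ξ p) :
    hittingTime ξ ω = p.length := by
  have hhit : walk ξ p.length ω = -1 := (walk_eq_partialSum hω le_rfl).trans hp.2
  refine (Nat.sInf_le hhit).antisymm (le_of_not_gt fun hlt => ?_)
  have hfirst : walk ξ (hittingTime ξ ω) ω = -1 :=
    Nat.sInf_mem (s := {n | walk ξ n ω = -1}) ⟨_, hhit⟩
  exact hp.1 _ hlt ((walk_eq_partialSum hω hlt.le).symm.trans hfirst)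

theorem walk_min_hittingTime (hp : IsFirstPassage p) (hω : ω ∈ pathCylinder ξ p) (j : ℕ) :
    walk ξ (min j (hittingTime ξ ω)) ω = partialSum p (min j p.length) := by
  rw [hittingTime_eq_length hp hω, walk_eq_partialSum hω (min_le_right _ _)]

variable (ξ) in
theorem setOf_exists_walk_eq_neg_one :
    {ω | ∃ m, walk ξ m ω = -1} = ⋃ p ∈ {p | IsFirstPassage p}, pathCylinder ξ p := by
  ext ω
  simp only [Set.mem_ofPred_eq, Set.mem_iUnion, exists_prop]
  constructor
  · intro hhit
    let p := (List.range (hittingTime ξ ω)).map (ξ · ω)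
    have hω : ω ∈ pathCylinder ξ p := fun j hj => by
      simp only [p, List.length_map, List.length_range] at hj
      simp [p, hj]
    have hlen : p.length = hittingTime ξ ω := by simp [p]
    refine ⟨p, ⟨fun j hj => ?_, ?_⟩, hω⟩
    · rw [← walk_eq_partialSum hω hj.le]
      exact Nat.notMem_of_lt_sInf (hlen ▸ hj)
    · rw [← walk_eq_partialSum hω le_rfl, hlen]
      exact Nat.sInf_mem hhit
  · rintro ⟨p, hp, hω⟩
    exact ⟨p.length, (walk_eq_partialSum hω le_rfl).trans hp.2⟩

end Walk

section Cylinders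

variable {Ω : Type*} [MeasurableSpace Ω] (P : Measure Ω) (μ : PMF ℕ) (ξ : ℕ → Ω → ℤ)
  (hiid : ∀ (n : ℕ) (z : ℕ → ℤ),
    P {ω | ∀ j < n, ξ j ω = z j} = ∏ j ∈ range n, stepLaw μ (z j))

include hiid

theorem measure_pathCylinder (p : List ℤ) : P (pathCylinder ξ p) = pathWeight μ p :=
  hiid _ _

variable [IsProbabilityMeasure P]

theorem measure_biUnion_pathCylinder_of_length_le {N : ℕ} {V : Set (List ℤ)}
    (hV : ∀ p ∈ V, IsFirstPassage p ∧ p.length ≤ N) :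
    P (⋃ p ∈ V, pathCylinder ξ p) = pathMeasure μ V := by
  rw [biUnion_pathCylinder_eq_preimage ξ fun p hp => (hV p hp).2,
    measure_steps_preimage P μ ξ hiid, stepsLaw_biUnion_pathBox μ hV]

theorem measure_compl_biUnion_pathCylinder_of_length_le {N : ℕ} {V : Set (List ℤ)}
    (hV : ∀ p ∈ V, IsFirstPassage p ∧ p.length ≤ N) :
    P (⋃ p ∈ V, pathCylinder ξ p)ᶜ = 1 - pathMeasure μ V := by
  rw [biUnion_pathCylinder_eq_preimage ξ fun p hp => (hV p hp).2, ← Set.preimage_compl,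
    measure_steps_preimage P μ ξ hiid, prob_compl_eq_one_sub .of_discrete,
    stepsLaw_biUnion_pathBox μ hV]

theorem measure_biUnion_pathCylinder {V : Set (List ℤ)} (hV : ∀ p ∈ V, IsFirstPassage p) :
    P (⋃ p ∈ V, pathCylinder ξ p) = pathMeasure μ V := by
  refine le_antisymm ?_ ?_
  · refine (measure_biUnion_le P V.to_countable _).trans_eq ?_
    rw [pathMeasure_apply]
    exact tsum_congr fun p => measure_pathCylinder P μ ξ hiid p
  · rw [pathMeasure_eq_iSup_inter_length_le]
    refine iSup_le fun N => ?_
    rw [← measure_biUnion_pathCylinder_of_length_le P μ ξ hiid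
      fun p hp => ⟨hV p hp.1, hp.2⟩]
    exact measure_mono (Set.biUnion_subset_biUnion_left Set.inter_subset_left)

theorem pathMeasure_setOf_isFirstPassage_le_one : pathMeasure μ {p | IsFirstPassage p} ≤ 1 :=
  (measure_biUnion_pathCylinder P μ ξ hiid fun _ hp => hp).symm.trans_le prob_le_one

theorem measure_compl_setOf_exists_walk_eq_neg_one
    (h1 : pathMeasure μ {p | IsFirstPassage p} = 1) :
    P {ω | ∃ m, walk ξ m ω = -1}ᶜ = 0 := by
  have hbound : ∀ N, P {ω | ∃ m, walk ξ m ω = -1}ᶜ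
      ≤ 1 - pathMeasure μ ({p | IsFirstPassage p} ∩ {p | p.length ≤ N}) := by
    intro N
    rw [← measure_compl_biUnion_pathCylinder_of_length_le P μ ξ hiid
      (V := {p | IsFirstPassage p} ∩ {p | p.length ≤ N}) fun p hp => hp,
      setOf_exists_walk_eq_neg_one]
    exact measure_mono (Set.compl_subset_compl.mpr
      (Set.biUnion_subset_biUnion_left Set.inter_subset_left))
  refine nonpos_iff_eq_zero.mp ?_
  calc P {ω | ∃ m, walk ξ m ω = -1}ᶜ
      ≤ ⨅ N, (1 - pathMeasure μ ({p | IsFirstPassage p} ∩ {p | p.length ≤ N})) :=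
        le_iInf hbound
    _ = 0 := by
      rw [← ENNReal.sub_iSup ENNReal.one_ne_top, ← pathMeasure_eq_iSup_inter_length_le, h1,
        tsub_self]

end Cylinders

theorem List.lt_append_of_ne_nil {α : Type*} [LinearOrder α] (u : List α) {w : List α}
    (hw : w ≠ []) : u < u ++ w :=
  List.lt_iff_exists.mpr <| .inl ⟨by simp, by simpa using List.length_pos_iff.mpr hw⟩

theorem List.dropLast_lt {α : Type*} [LinearOrder α] {v : List α} (hv : v ≠ []) :
    v.dropLast < v := by
  conv_rhs => rw [← List.dropLast_append_getLast hv]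
  exact List.lt_append_of_ne_nil _ (List.cons_ne_nil _ _)

namespace OTree

variable (t : OTree)

theorem prefix_mem {u v : List ℕ} (hv : v ∈ t.verts) (h : u <+: v) : u ∈ t.verts := by
  obtain ⟨w, rfl⟩ := h
  induction w using List.reverseRecOn with
  | nil => simpa using hv
  | append_singleton w a ih =>
      rw [← List.append_assoc] at hv
      exact ih (t.snoc_mem _ _ hv).1

noncomputable def childSet (u : List ℕ) : Finset (List ℕ) :=
  t.verts.filter fun v => u <+: v ∧ v.length = u.length + 1

theorem card_childSet (u : List ℕ) : (t.childSet u).card = t.kids u := rfl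

theorem mem_childSet_iff {u v : List ℕ} :
    v ∈ t.childSet u ↔ v ∈ t.verts ∧ ∃ c, v = u ++ [c] := by
  simp only [childSet, mem_filter]
  constructor
  · rintro ⟨hv, ⟨w, rfl⟩, hl⟩
    obtain ⟨c, rfl⟩ := List.length_eq_one_iff.mp (by simpa using hl)
    exact ⟨hv, c, rfl⟩
  · rintro ⟨hv, c, rfl⟩
    exact ⟨hv, List.prefix_append _ _, by simp⟩

theorem snoc_mem_iff {u : List ℕ} {c : ℕ} : u ++ [c] ∈ t.verts ↔ 1 ≤ c ∧ c ≤ t.kids u := by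
  have hcard : ∀ m, ((Icc 1 m).image fun a => u ++ [a]).card = m := fun m => by
    rw [card_image_of_injective _ fun a b hab => by simpa using hab, Nat.card_Icc,
      Nat.add_sub_cancel]
  constructor
  · intro h
    refine ⟨(t.snoc_mem _ _ h).2, (hcard c).symm.trans_le (card_le_card fun v hv => ?_)⟩
    obtain ⟨a, ha, rfl⟩ := mem_image.mp hv
    rw [mem_Icc] at ha
    exact (t.mem_childSet_iff).mpr ⟨t.initial_seg u a c h ha.1 ha.2, a, rfl⟩
  · rintro ⟨hc1, hck⟩
    by_contra hnot
    have hsub : t.childSet u ⊆ (Icc 1 (c - 1)).image fun a => u ++ [a] := fun v hv => by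
      obtain ⟨hv, a, rfl⟩ := (t.mem_childSet_iff).mp hv
      have hac : a < c := lt_of_not_ge fun hca => hnot (t.initial_seg u c a hv hc1 hca)
      exact mem_image.mpr ⟨a, mem_Icc.mpr ⟨(t.snoc_mem _ _ hv).2, by omega⟩, rfl⟩
    have := (card_le_card hsub).trans_eq (hcard _)
    rw [card_childSet] at this
    omega

theorem vtx_eq_orderEmbOfFin {n : ℕ} (h : n < t.verts.card) :
    t.vtx n = t.verts.orderEmbOfFin rfl ⟨n, h⟩ := by
  rw [vtx, List.getD_eq_getElem _ _ (by rwa [length_sort]), orderEmbOfFin_apply]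
  rfl

theorem vtx_mem {n : ℕ} (h : n < t.verts.card) : t.vtx n ∈ t.verts := by
  rw [t.vtx_eq_orderEmbOfFin h]
  exact orderEmbOfFin_mem _ _ _

theorem vtx_lt_vtx_iff {i j : ℕ} (hi : i < t.verts.card) (hj : j < t.verts.card) :
    t.vtx i < t.vtx j ↔ i < j := by
  rw [t.vtx_eq_orderEmbOfFin hi, t.vtx_eq_orderEmbOfFin hj, OrderEmbedding.lt_iff_lt,
    Fin.mk_lt_mk]

theorem vtx_le_vtx_iff {i j : ℕ} (hi : i < t.verts.card) (hj : j < t.verts.card) :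
    t.vtx i ≤ t.vtx j ↔ i ≤ j := by
  rw [t.vtx_eq_orderEmbOfFin hi, t.vtx_eq_orderEmbOfFin hj, OrderEmbedding.le_iff_le,
    Fin.mk_le_mk]

theorem vtx_injOn {i j : ℕ} (hi : i < t.verts.card) (hj : j < t.verts.card)
    (h : t.vtx i = t.vtx j) : i = j :=
  le_antisymm ((t.vtx_le_vtx_iff hi hj).mp h.le) ((t.vtx_le_vtx_iff hj hi).mp h.ge)

theorem exists_vtx_eq {u : List ℕ} (hu : u ∈ t.verts) : ∃ n < t.verts.card, t.vtx n = u := by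
  rw [← Finset.mem_coe, ← range_orderEmbOfFin _ rfl] at hu
  obtain ⟨⟨n, hn⟩, rfl⟩ := hu
  exact ⟨n, hn, t.vtx_eq_orderEmbOfFin hn⟩

theorem image_vtx_range : (range t.verts.card).image t.vtx = t.verts := by
  ext u
  simp only [mem_image, mem_range]
  exact ⟨fun ⟨n, hn, hu⟩ => hu ▸ t.vtx_mem hn, t.exists_vtx_eq⟩

theorem vtx_zero : t.vtx 0 = [] := by
  obtain ⟨n, hn, hroot⟩ := t.exists_vtx_eq t.root_mem
  rcases Nat.eq_zero_or_pos n with rfl | hpos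
  · exact hroot
  · exact absurd ((t.vtx_lt_vtx_iff (by omega) hn).mpr hpos) (hroot ▸ List.not_lt_nil _)

theorem exists_parent {j : ℕ} (h0 : 0 < j) (hj : j < t.verts.card) :
    ∃ i < j, ∃ c, t.vtx j = t.vtx i ++ [c] := by
  have hne : t.vtx j ≠ [] := fun h =>
    h0.ne' (t.vtx_injOn hj (by omega) (h.trans t.vtx_zero.symm))
  obtain ⟨i, hi, hvi⟩ := t.exists_vtx_eq (t.prefix_mem (t.vtx_mem hj) (List.dropLast_prefix _))
  refine ⟨i, (t.vtx_lt_vtx_iff hi hj).mp (hvi ▸ List.dropLast_lt hne), (t.vtx j).getLast hne, ?_⟩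
  rw [hvi, List.dropLast_append_getLast hne]

theorem sum_kids_vtx {j : ℕ} (hj : j ≤ t.verts.card) :
    ∑ i ∈ range j, t.kids (t.vtx i) = ((range j).biUnion fun i => t.childSet (t.vtx i)).card := by
  rw [card_biUnion fun i hi i' hi' hne => disjoint_left.mpr fun v hv hv' => ?_]
  · rfl
  obtain ⟨-, a, rfl⟩ := (t.mem_childSet_iff).mp hv
  obtain ⟨-, b, hb⟩ := (t.mem_childSet_iff).mp hv'
  simp only [coe_range, Set.mem_Iio] at hi hi'
  exact hne (t.vtx_injOn (by omega) (by omega) (List.append_inj_left' hb rfl))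

theorem D_eq_sub (j : ℕ) : t.D j = ∑ i ∈ range j, (t.kids (t.vtx i) : ℤ) - j := by
  simp [D, sum_sub_distrib]

/-- The vertices `u_1, …, u_j` are children of vertices among `u_0, …, u_{j-1}`. -/
theorem D_nonneg {j : ℕ} (hj : j < t.verts.card) : 0 ≤ t.D j := by
  have hsub : (range j).image (fun i => t.vtx (i + 1))
      ⊆ (range j).biUnion fun i => t.childSet (t.vtx i) := fun v hv => by
    obtain ⟨i, hi, rfl⟩ := mem_image.mp hv
    rw [mem_range] at hi
    obtain ⟨k, hk, c, hc⟩ := t.exists_parent i.succ_pos (by omega)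
    refine mem_biUnion.mpr ⟨k, mem_range.mpr (by omega), (t.mem_childSet_iff).mpr ?_⟩
    exact ⟨t.vtx_mem (by omega), c, hc⟩
  have hinj : Set.InjOn (fun i => t.vtx (i + 1)) (range j) := fun a ha b hb hab => by
    simp only [coe_range, Set.mem_Iio] at ha hb
    simpa using t.vtx_injOn (by omega) (by omega) hab
  have hle := (card_le_card hsub).trans_eq (t.sum_kids_vtx hj.le).symm
  rw [card_image_of_injOn hinj, card_range] at hle
  rw [D_eq_sub, ← Nat.cast_sum]
  omega

/-- Every non-root vertex is the child of exactly one vertex. -/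
theorem D_card : t.D t.verts.card = -1 := by
  have hchildren : ((range t.verts.card).biUnion fun i => t.childSet (t.vtx i))
      = t.verts.erase [] := by
    ext v
    rw [mem_biUnion, mem_erase]
    constructor
    · rintro ⟨i, -, hv⟩
      obtain ⟨hv, c, rfl⟩ := (t.mem_childSet_iff).mp hv
      exact ⟨by simp, hv⟩
    · rintro ⟨hne, hv⟩
      obtain ⟨j, hj, rfl⟩ := t.exists_vtx_eq hv
      obtain ⟨i, hi, c, hc⟩ := t.exists_parent
        (Nat.pos_of_ne_zero fun h => hne (by subst h; exact t.vtx_zero)) hj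
      exact ⟨i, mem_range.mpr (by omega), (t.mem_childSet_iff).mpr ⟨hv, c, hc⟩⟩
  have hsum := t.sum_kids_vtx le_rfl
  rw [hchildren, card_erase_of_mem t.root_mem] at hsum
  have hpos : 0 < t.verts.card := card_pos.mpr ⟨_, t.root_mem⟩
  rw [D_eq_sub, ← Nat.cast_sum, hsum]
  omega

def succCands (j : ℕ) : Set (List ℕ) :=
  {v | ∃ i ≤ j, ∃ c, 1 ≤ c ∧ c ≤ t.kids (t.vtx i) ∧ v = t.vtx i ++ [c]}

/-- The parent of `u_{j+1}` is among `u_0, …, u_j`, so `u_{j+1}` is determined by these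
vertices and their numbers of children. -/
theorem isLeast_vtx_succ {j : ℕ} (hj : j + 1 < t.verts.card) :
    IsLeast {v | v ∈ t.succCands j ∧ t.vtx j < v} (t.vtx (j + 1)) := by
  constructor
  · obtain ⟨i, hi, c, hc⟩ := t.exists_parent j.succ_pos hj
    have hbounds := (t.snoc_mem_iff).mp (hc ▸ t.vtx_mem hj)
    exact ⟨⟨i, by omega, c, hbounds.1, hbounds.2, hc⟩,
      (t.vtx_lt_vtx_iff (by omega) hj).mpr j.lt_succ_self⟩
  · rintro v ⟨⟨i, -, c, hc1, hc2, rfl⟩, hlt⟩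
    obtain ⟨m, hm, hvm⟩ := t.exists_vtx_eq ((t.snoc_mem_iff).mpr ⟨hc1, hc2⟩)
    rw [← hvm] at hlt ⊢
    exact (t.vtx_le_vtx_iff hj hm).mpr ((t.vtx_lt_vtx_iff (by omega) hm).mp hlt)

theorem vtx_eq_of_kids_vtx_eq {t t' : OTree} (hcard : t.verts.card = t'.verts.card)
    (hkids : ∀ j < t.verts.card, t.kids (t.vtx j) = t'.kids (t'.vtx j)) {j : ℕ}
    (hj : j < t.verts.card) : t.vtx j = t'.vtx j := by
  induction j using Nat.strong_induction_on with
  | _ j ih =>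
    cases j with
    | zero => rw [t.vtx_zero, t'.vtx_zero]
    | succ j =>
      have hcands : t.succCands j = t'.succCands j :=
        Set.ext fun v => exists_congr fun i => and_congr_right fun hi => by
          rw [hkids i (by omega), ih i (by omega) (by omega)]
      have hleast := t'.isLeast_vtx_succ (hcard ▸ hj)
      rw [← hcands, ← ih j (by omega) (by omega)] at hleast
      exact (t.isLeast_vtx_succ hj).unique hleast

theorem verts_injective : Function.Injective OTree.verts := fun t t' h => by
  cases t; cases t'; simpa using h

instance : Countable OTree := verts_injective.countable

theorem eq_of_kids_vtx_eq {t t' : OTree} (hcard : t.verts.card = t'.verts.card)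
    (hkids : ∀ j < t.verts.card, t.kids (t.vtx j) = t'.kids (t'.vtx j)) : t = t' :=
  verts_injective <| by
    rw [← t.image_vtx_range, ← t'.image_vtx_range, ← hcard]
    exact image_congr fun j hj => vtx_eq_of_kids_vtx_eq hcard hkids (mem_range.mp hj)

noncomputable def lukSteps : List ℤ :=
  (List.range t.verts.card).map fun j => (t.kids (t.vtx j) : ℤ) - 1

theorem length_lukSteps : t.lukSteps.length = t.verts.card := by simp [lukSteps]

theorem getD_lukSteps {j : ℕ} (hj : j < t.verts.card) :
    t.lukSteps.getD j 0 = (t.kids (t.vtx j) : ℤ) - 1 := by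
  simp [lukSteps, hj]

theorem partialSum_lukSteps {j : ℕ} (hj : j ≤ t.verts.card) : partialSum t.lukSteps j = t.D j :=
  sum_congr rfl fun i hi => t.getD_lukSteps (by rw [mem_range] at hi; omega)

theorem isFirstPassage_lukSteps : IsFirstPassage t.lukSteps := by
  rw [IsFirstPassage, length_lukSteps, t.partialSum_lukSteps le_rfl]
  exact ⟨fun j hj => by have := t.D_nonneg hj; rw [t.partialSum_lukSteps hj.le]; omega, t.D_card⟩

theorem pathWeight_lukSteps (μ : PMF ℕ) :
    pathWeight μ t.lukSteps = ∏ u ∈ t.verts, μ (t.kids u) := by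
  conv_rhs => rw [← t.image_vtx_range]
  rw [pathWeight, length_lukSteps,
    prod_image fun i hi j hj => t.vtx_injOn (mem_range.mp hi) (mem_range.mp hj)]
  refine prod_congr rfl fun j hj => ?_
  rw [t.getD_lukSteps (mem_range.mp hj), stepLaw, if_pos (by omega)]
  congr
  omega

theorem lukSteps_injective : Function.Injective lukSteps := fun t t' h => by
  have hcard : t.verts.card = t'.verts.card := by
    simpa only [length_lukSteps] using congrArg List.length h
  refine eq_of_kids_vtx_eq hcard fun j hj => ?_
  have hj' := congrArg (·.getD j 0) h
  simp only [t.getD_lukSteps hj, t'.getD_lukSteps (hcard ▸ hj)] at hj'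
  omega

end OTree

theorem range_lukSteps_subset : Set.range OTree.lukSteps ⊆ {p | IsFirstPassage p} := by
  rintro _ ⟨t, rfl⟩
  exact t.isFirstPassage_lukSteps

section GaltonWatson

variable {Ω : Type*} [MeasurableSpace Ω] (P : Measure Ω) [IsProbabilityMeasure P]
  (μ : PMF ℕ) (τ : Ω → OTree)
  (hGW : ∀ t : OTree, P {ω | τ ω = t} = ∏ u ∈ t.verts, μ (t.kids u))
  (ξ : ℕ → Ω → ℤ)
  (hiid : ∀ (n : ℕ) (z : ℕ → ℤ),
    P {ω | ∀ j < n, ξ j ω = z j} = ∏ j ∈ range n, stepLaw μ (z j))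

include hGW hiid

theorem measure_preimage_tree (I : Set OTree) :
    P (τ ⁻¹' I) = pathMeasure μ (OTree.lukSteps '' I) := by
  have hweight : ∀ t, P (τ ⁻¹' {t}) = pathWeight μ t.lukSteps :=
    fun t => (hGW t).trans (t.pathWeight_lukSteps μ).symm
  have htot : ∑' t, P (τ ⁻¹' {t}) ≤ 1 := by
    simp only [hweight]
    rw [← tsum_range (pathWeight μ) OTree.lukSteps_injective, ← pathMeasure_apply]
    exact (measure_mono range_lukSteps_subset).trans
      (pathMeasure_setOf_isFirstPassage_le_one P μ ξ hiid)
  rw [measure_preimage_eq_tsum_of_tsum_le_one P τ htot, pathMeasure_apply,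
    tsum_image _ OTree.lukSteps_injective.injOn]
  exact tsum_congr fun t => hweight t

theorem pathMeasure_range_lukSteps : pathMeasure μ (Set.range OTree.lukSteps) = 1 := by
  rw [← Set.image_univ, ← measure_preimage_tree P μ τ hGW ξ hiid, Set.preimage_univ,
    measure_univ]

theorem pathMeasure_setOf_isFirstPassage : pathMeasure μ {p | IsFirstPassage p} = 1 :=
  le_antisymm (pathMeasure_setOf_isFirstPassage_le_one P μ ξ hiid)
    (pathMeasure_range_lukSteps P μ τ hGW ξ hiid ▸ measure_mono range_lukSteps_subset)

theorem range_lukSteps_ae_eq :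
    Set.range OTree.lukSteps =ᵐ[pathMeasure μ] {p | IsFirstPassage p} := by
  have hFP := pathMeasure_setOf_isFirstPassage P μ τ hGW ξ hiid
  refine ae_eq_of_subset_of_measure_ge range_lukSteps_subset ?_
    MeasurableSet.of_discrete.nullMeasurableSet (by simp [hFP])
  rw [hFP, pathMeasure_range_lukSteps P μ τ hGW ξ hiid]

end GaltonWatson

theorem setOf_walk_min_hittingTime_inter_hit {Ω : Type*} (ξ : ℕ → Ω → ℤ) (n : ℕ)
    (x : ℕ → ℤ) :
    {ω | ∀ j ≤ n, walk ξ (min j (hittingTime ξ ω)) ω = x j} ∩ {ω | ∃ m, walk ξ m ω = -1}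
      = ⋃ p ∈ {p | IsFirstPassage p ∧ ∀ j ≤ n, partialSum p (min j p.length) = x j},
          pathCylinder ξ p := by
  rw [setOf_exists_walk_eq_neg_one]
  ext ω
  simp only [Set.mem_inter_iff, Set.mem_iUnion, Set.mem_ofPred_eq, exists_prop]
  constructor
  · rintro ⟨hE, p, hp, hω⟩
    exact ⟨p, ⟨hp, fun j hj => walk_min_hittingTime hp hω j ▸ hE j hj⟩, hω⟩
  · rintro ⟨p, ⟨hp, hC⟩, hω⟩
    exact ⟨fun j hj => (walk_min_hittingTime hp hω j).trans (hC j hj), p, hp, hω⟩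

theorem lukasiewicz_of_GW_is_stopped_random_walk_general
    {Ω : Type*} [MeasurableSpace Ω] (P : Measure Ω) [IsProbabilityMeasure P]
    (μ : PMF ℕ)
    (τ : Ω → OTree)
    -- `τ` is a Galton-Watson tree with offspring distribution `μ`:
    (hGW : ∀ t : OTree, P {ω | τ ω = t} = ∏ u ∈ t.verts, μ (t.kids u))
    -- `(ξ_j)` are i.i.d. jumps with distribution `ρ(k) = μ(k+1)`, `k ≥ -1`:
    (ξ : ℕ → Ω → ℤ)
    (hiid : ∀ (n : ℕ) (z : ℕ → ℤ),
      P {ω | ∀ j < n, ξ j ω = z j} = ∏ j ∈ Finset.range n, stepLaw μ (z j))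
    -- `S` is the associated random walk started at `0`, `T` its hitting time of `-1`:
    (S : ℕ → Ω → ℤ) (hS : ∀ n ω, S n ω = ∑ j ∈ Finset.range n, ξ j ω)
    (T : Ω → ℕ) (hT : ∀ ω, T ω = sInf {n | S n ω = -1}) :
    ∀ (n : ℕ) (x : ℕ → ℤ),
      P {ω | ∀ j ≤ n, (τ ω).D (min j (τ ω).verts.card) = x j}
        = P {ω | ∀ j ≤ n, S (min j (T ω)) ω = x j} := by
  intro n x
  obtain rfl : S = walk ξ := funext fun m => funext (hS m)
  obtain rfl : T = hittingTime ξ := funext hT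
  set C : Set (List ℤ) := {p | ∀ j ≤ n, partialSum p (min j p.length) = x j}
  have htree : {ω | ∀ j ≤ n, (τ ω).D (min j (τ ω).verts.card) = x j}
      = τ ⁻¹' (OTree.lukSteps ⁻¹' C) := by
    ext ω
    simp only [Set.mem_preimage, Set.mem_ofPred_eq, C, OTree.length_lukSteps,
      (τ ω).partialSum_lukSteps (min_le_right _ _)]
  have hhit := measure_compl_setOf_exists_walk_eq_neg_one P μ ξ hiid
    (pathMeasure_setOf_isFirstPassage P μ τ hGW ξ hiid)
  rw [htree, measure_preimage_tree P μ τ hGW ξ hiid, Set.image_preimage_eq_range_inter,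
    measure_congr ((range_lukSteps_ae_eq P μ τ hGW ξ hiid).inter (ae_eq_refl C)),
    ← measure_inter_conull hhit, setOf_walk_min_hittingTime_inter_hit,
    measure_biUnion_pathCylinder P μ ξ hiid fun p hp => hp.1]
  rfl

/-- If `τ` is a (sub)critical Galton-Watson tree with offspring
distribution `μ`, then its Lukasiewicz path `D(τ)` (stopped at time `#τ`, where it
equals `-1`) is distributed as a random walk started at `0`, stopped at its first
hitting time of `-1`, with jump distribution `ρ(k) = μ(k+1)`, `k ≥ -1`. -/
theorem lukasiewicz_of_GW_is_stopped_random_walk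
    {Ω : Type*} [MeasurableSpace Ω] (P : Measure Ω) [IsProbabilityMeasure P]
    (μ : PMF ℕ) (hsub : ∑' k : ℕ, (k : ℝ≥0∞) * μ k ≤ 1)
    (τ : Ω → OTree)
    -- `τ` is a Galton-Watson tree with offspring distribution `μ`:
    (hGW : ∀ t : OTree, P {ω | τ ω = t} = ∏ u ∈ t.verts, μ (t.kids u))
    -- `(ξ_j)` are i.i.d. jumps with distribution `ρ(k) = μ(k+1)`, `k ≥ -1`:
    (ξ : ℕ → Ω → ℤ)
    (hiid : ∀ (n : ℕ) (z : ℕ → ℤ),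
      P {ω | ∀ j < n, ξ j ω = z j} = ∏ j ∈ Finset.range n, stepLaw μ (z j))
    -- `S` is the associated random walk started at `0`, `T` its hitting time of `-1`:
    (S : ℕ → Ω → ℤ) (hS : ∀ n ω, S n ω = ∑ j ∈ Finset.range n, ξ j ω)
    (T : Ω → ℕ) (hT : ∀ ω, T ω = sInf {n | S n ω = -1}) :
    ∀ (n : ℕ) (x : ℕ → ℤ),
      P {ω | ∀ j ≤ n, (τ ω).D (min j (τ ω).verts.card) = x j}
        = P {ω | ∀ j ≤ n, S (min j (T ω)) ω = x j} :=
  lukasiewicz_of_GW_is_stopped_random_walk_general P μ τ hGW ξ hiid S hS T hT
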